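/- arXiv:2509.20880 — 2 statements merged into one kernel-verified Lean document; each statement's English description precedes it below -/
import Mathlib

section
/- θ_{m,ℓ} is not the zero map, while θ_{m,ℓ+1} is the zero map; hence ℓ + 1 is the smallest positive integer k for which θ_{m,k} is the zero map. -/
/-!
Put `ℓ = ⌊n/m⌋`, so `mℓ < n < m(ℓ + 1)` because `m ∤ n`. When `mk < n`, the indices `1, …, mk`
are distinct mod `n`, so the indicator vector of position `mk` has `θ_{m,k}` equal to `1` at
position `0`. When `n < mk`, the index `j = mk - n` is not divisible by `m` (as `m ∤ n`) and is
congruent to `mk` mod `n`, so every value of `θ_{m,k}` contains the factor `x_j (x_j + 1) = 0`.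
-/

/-- Index `i + j` computed modulo `n`, for `i : Fin n` and `j : ℕ`. -/
def idx {n : ℕ} (i : Fin n) (j : ℕ) : Fin n :=
  ⟨(i.val + j) % n, Nat.mod_lt _ i.pos⟩

/-- The map `θ_{m,k} : F_2^n → F_2^n`; `θ_{m,0}` is the identity map, and for `k ≥ 1`,
`(θ_{m,k}(x))_i = x_{i+mk} · ∏_{1 ≤ j ≤ mk−1, m ∤ j} (x_{i+j} + 1)` (indices mod `n`). -/
def theta (n m k : ℕ) : (Fin n → ZMod 2) → Fin n → ZMod 2 :=
  if k = 0 then id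
  else fun x i =>
    x (idx i (m * k)) *
      ∏ j ∈ (Finset.Ico 1 (m * k)).filter (fun j => ¬ m ∣ j), (x (idx i j) + 1)

lemma ZMod.mul_self_add_one_eq_zero (a : ZMod 2) : a * (a + 1) = 0 := by
  decide +revert

lemma idx_add_self {n : ℕ} (i : Fin n) (j : ℕ) : idx i (j + n) = idx i j := by
  ext
  simp [idx, ← Nat.add_assoc]

lemma idx_zero_eq {n : ℕ} (hn : 0 < n) {j : ℕ} (hj : j < n) : idx ⟨0, hn⟩ j = ⟨j, hj⟩ := by
  ext
  simp [idx, Nat.mod_eq_of_lt hj]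

lemma theta_apply {n m k : ℕ} (hk : k ≠ 0) (x : Fin n → ZMod 2) (i : Fin n) :
    theta n m k x i = x (idx i (m * k)) *
      ∏ j ∈ (Finset.Ico 1 (m * k)).filter (fun j => ¬ m ∣ j), (x (idx i j) + 1) := by
  simp [theta, hk]

theorem theta_ne_zero_of_mul_lt {n m k : ℕ} (h : m * k < n) : theta n m k ≠ 0 := by
  have hn : 0 < n := by omega
  set p : Fin n := ⟨m * k, h⟩
  have hx : theta n m k (Pi.single p 1) ⟨0, hn⟩ = 1 := by
    rcases eq_or_ne k 0 with rfl | hk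
    · simp [theta, p]
    rw [theta_apply hk, idx_zero_eq hn h, Pi.single_eq_same, one_mul]
    refine Finset.prod_eq_one fun j hj => ?_
    have hjk : j < m * k := (Finset.mem_Ico.mp (Finset.mem_filter.mp hj).1).2
    have hjp : (⟨j, hjk.trans h⟩ : Fin n) ≠ p := Fin.ne_of_val_ne hjk.ne
    rw [idx_zero_eq hn (hjk.trans h), Pi.single_eq_of_ne hjp, zero_add]
  intro h0
  simp [h0] at hx

theorem theta_eq_zero_of_lt_mul {n m k : ℕ} (hmn : ¬ m ∣ n) (h : n < m * k) :
    theta n m k = 0 := by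
  have hk : k ≠ 0 := by rintro rfl; simp at h
  have hn : n ≠ 0 := by rintro rfl; simp at hmn
  have hj : m * k - n ∈ (Finset.Ico 1 (m * k)).filter (fun j => ¬ m ∣ j) := by
    refine Finset.mem_filter.mpr
      ⟨Finset.mem_Ico.mpr ⟨Nat.sub_pos_of_lt h, by omega⟩, fun hd => hmn ?_⟩
    simpa [Nat.sub_sub_self h.le] using Nat.dvd_sub (dvd_mul_right m k) hd
  have hidx (i : Fin n) : idx i (m * k) = idx i (m * k - n) := by
    simpa [Nat.sub_add_cancel h.le] using idx_add_self i (m * k - n)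
  funext x i
  rw [theta_apply hk, hidx, ← Finset.mul_prod_erase _ _ hj, ← mul_assoc,
    ZMod.mul_self_add_one_eq_zero, zero_mul, Pi.zero_apply, Pi.zero_apply]

theorem stmt1_general (n m : ℕ) (hm : 2 ≤ m) (hmn : ¬ m ∣ n) :
    (∃ x : Fin n → ZMod 2, theta n m (n / m) x ≠ 0) ∧
    (∀ x : Fin n → ZMod 2, theta n m (n / m + 1) x = 0) ∧
    (∀ k : ℕ, 1 ≤ k → (∀ x : Fin n → ZMod 2, theta n m k x = 0) → n / m + 1 ≤ k) := by
  have hlt : m * (n / m) < n := Nat.mul_div_lt_iff_not_dvd.mpr hmn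
  have hgt : n < m * (n / m + 1) := Nat.lt_mul_div_succ n (by omega)
  refine ⟨Function.ne_iff.mp (theta_ne_zero_of_mul_lt hlt),
    congrFun (theta_eq_zero_of_lt_mul hmn hgt), fun k _ hk => ?_⟩
  by_contra! hkm
  have hmk : m * k < n := (Nat.mul_le_mul_left m (Nat.le_of_lt_succ hkm)).trans_lt hlt
  exact theta_ne_zero_of_mul_lt hmk (funext hk)

theorem stmt1 (n m : ℕ) (hn : 1 ≤ n) (hm : 2 ≤ m) (hmn : ¬ m ∣ n) :
    (∃ x : Fin n → ZMod 2, theta n m (n / m) x ≠ 0) ∧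
    (∀ x : Fin n → ZMod 2, theta n m (n / m + 1) x = 0) ∧
    (∀ k : ℕ, 1 ≤ k → (∀ x : Fin n → ZMod 2, theta n m k x = 0) → n / m + 1 ≤ k) :=
  stmt1_general n m hm hmn
end

section
/- For every integer k ≥ 1, the k-fold compositional iterate of χ_{n,m} satisfies χ_{n,m}^k = Σ_{j=0}^{min(k,ℓ)} a_j θ_{m,j}, where a_j ∈ F_2 equals 1 if and only if the binomial coefficient C(k, j) is odd (equivalently, if and only if every base-2 digit of j is at most the corresponding base-2 digit of k). -/
open Finset

theorem ZMod.eq_zero_of_dvd_of_add_one_dvd {z a : ZMod 2} (h₁ : z ∣ a) (h₂ : z + 1 ∣ a) :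
    a = 0 := by
  obtain ⟨b, rfl⟩ := h₁
  obtain ⟨c, hc⟩ := h₂
  revert z b c; decide

theorem ZMod.mul_eq_zero_of_dvd_of_add_one_dvd {z a b : ZMod 2} (ha : z ∣ a) (hb : z + 1 ∣ b) :
    a * b = 0 :=
  eq_zero_of_dvd_of_add_one_dvd (ha.mul_right b) (hb.mul_left a)

theorem Finset.mul_prod_eq_mul_prod {ι M : Type*} [CommMonoid M] (s : Finset ι) (e : M)
    {f g : ι → M} (h : ∀ i ∈ s, e * f i = e * g i) : e * ∏ i ∈ s, f i = e * ∏ i ∈ s, g i := by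
  classical
  induction s using Finset.induction with
  | empty => rfl
  | insert a s ha ih =>
    rw [prod_insert ha, prod_insert ha, mul_left_comm, ih fun i hi => h i (mem_insert_of_mem hi),
      ← mul_assoc, ← mul_assoc, mul_comm (f a), h a (mem_insert_self a s)]

theorem Finset.sum_range_succ_choose_nsmul {M : Type*} [AddCommMonoid M] (t : ℕ → M) (k : ℕ) :
    ∑ j ∈ range (k + 2), (k + 1).choose j • t j =
      ∑ j ∈ range (k + 1), k.choose j • (t j + t (j + 1)) := by
  have hshift : ∑ j ∈ range (k + 1), k.choose (j + 1) • t (j + 1) + t 0 =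
      ∑ j ∈ range (k + 1), k.choose j • t j := by
    have := sum_range_succ' (fun j => k.choose j • t j) (k + 1)
    simp only [Nat.choose_zero_right, one_smul] at this
    rw [← this, sum_range_succ, Nat.choose_succ_self, zero_smul, add_zero]
  rw [sum_range_succ', Nat.choose_zero_right, one_smul]
  simp only [Nat.choose_succ_succ, add_smul, sum_add_distrib, smul_add]
  rw [add_assoc, hshift, add_comm]

theorem Function.comp_iterate_eq_sum_choose_nsmul {α M : Type*} [AddCommMonoid M] {f : α → α}
    {T : ℕ → α → M} (hT : ∀ j, T j ∘ f = T j + T (j + 1)) (k : ℕ) :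
    T 0 ∘ f^[k] = ∑ j ∈ range (k + 1), k.choose j • T j := by
  induction k with
  | zero => simp
  | succ k ih =>
    rw [Function.iterate_succ, ← Function.comp_assoc, ih, sum_range_succ_choose_nsmul]
    ext x
    simp only [Function.comp_apply, Finset.sum_apply, Pi.smul_apply, ← hT]

section Sequences

variable (m : ℕ)

def gapProd (u : ℕ → ZMod 2) (N : ℕ) : ZMod 2 :=
  ∏ s ∈ (range N).filter (¬ m ∣ ·), (u s + 1)

def thetaSeq (k : ℕ) (u : ℕ → ZMod 2) : ZMod 2 :=
  u (m * k) * gapProd m u (m * k)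

def chiSeq (u : ℕ → ZMod 2) (s : ℕ) : ZMod 2 :=
  u s + thetaSeq m 1 (fun t => u (s + t))

theorem chiSeq_apply (u : ℕ → ZMod 2) (s : ℕ) :
    chiSeq m u s = u s + thetaSeq m 1 (fun t => u (s + t)) := rfl

variable {m}

theorem gapProd_add (u : ℕ → ZMod 2) {A : ℕ} (hA : m ∣ A) (B : ℕ) :
    gapProd m u (A + B) = gapProd m u A * gapProd m (fun t => u (A + t)) B := by
  simp only [gapProd, prod_filter, prod_range_add, Nat.dvd_add_right hA]

theorem add_one_dvd_gapProd (u : ℕ → ZMod 2) {N r : ℕ} (hr : r < N) (hmr : ¬ m ∣ r) :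
    u r + 1 ∣ gapProd m u N :=
  dvd_prod_of_mem _ (mem_filter.mpr ⟨mem_range.mpr hr, hmr⟩)

theorem thetaSeq_zero (u : ℕ → ZMod 2) : thetaSeq m 0 u = u 0 := by
  simp [thetaSeq, gapProd]

theorem add_one_dvd_thetaSeq (u : ℕ → ZMod 2) {k r : ℕ} (hr : r < m * k) (hmr : ¬ m ∣ r) :
    u r + 1 ∣ thetaSeq m k u :=
  (add_one_dvd_gapProd u hr hmr).mul_left _

theorem dvd_thetaSeq_one_shift (u : ℕ → ZMod 2) (s : ℕ) :
    u (s + m) ∣ thetaSeq m 1 (fun t => u (s + t)) := by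
  simpa [thetaSeq] using dvd_mul_right (u (s + m)) _

theorem add_one_dvd_thetaSeq_one_shift (u : ℕ → ZMod 2) {s q : ℕ} (hsq : s < q)
    (hqs : q < s + m) : u q + 1 ∣ thetaSeq m 1 (fun t => u (s + t)) := by
  have hm : ¬ m ∣ q - s := fun h => by have := Nat.le_of_dvd (by omega) h; omega
  simpa [show s + (q - s) = q by omega] using
    add_one_dvd_thetaSeq (fun t => u (s + t)) (k := 1) (by omega) hm

theorem chiSeq_shift (u : ℕ → ZMod 2) (a : ℕ) :
    (fun t => chiSeq m u (a + t)) = chiSeq m (fun t => u (a + t)) := by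
  funext t
  simp only [chiSeq, add_assoc]

/-- The correction term `θ_{m,1}(u_{s+·})` that `χ` adds at a non-multiple `s` of `m` carries the
factor `u_{s+m}`. In the last block `s < m` it is annihilated by `(χ u)_m`, in every earlier block
by the factor `u_{s+m} + 1` of the product over the following block. -/
theorem chiSeq_mul_gapProd (u : ℕ → ZMod 2) {j : ℕ} (hj : 1 ≤ j) :
    chiSeq m u (m * j) * gapProd m (chiSeq m u) (m * j) =
      chiSeq m u (m * j) * gapProd m u (m * j) := by
  induction j, hj using Nat.le_induction generalizing u with
  | base =>
    rw [mul_one]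
    refine mul_prod_eq_mul_prod _ _ fun s hs => ?_
    obtain ⟨hsm, hms⟩ := mem_filter.mp hs
    have hs0 : 0 < s := Nat.pos_of_ne_zero fun h => hms (h ▸ dvd_zero m)
    rw [mem_range] at hsm
    suffices chiSeq m u m * thetaSeq m 1 (fun t => u (s + t)) = 0 by
      rw [chiSeq_apply m u s]; linear_combination this
    have hx : u m * thetaSeq m 1 (fun t => u (s + t)) = 0 :=
      ZMod.mul_eq_zero_of_dvd_of_add_one_dvd dvd_rfl
        (add_one_dvd_thetaSeq_one_shift u (by omega) (by omega))
    have hφ : thetaSeq m 1 (fun t => u (m + t)) * thetaSeq m 1 (fun t => u (s + t)) = 0 := by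
      rw [mul_comm]
      exact ZMod.mul_eq_zero_of_dvd_of_add_one_dvd (dvd_thetaSeq_one_shift u s)
        (add_one_dvd_thetaSeq_one_shift u (q := s + m) (by omega) (by omega))
    rw [chiSeq_apply m u m, add_mul, hx, hφ, add_zero]
  | succ j hj ih =>
    have hy : chiSeq m u (m + m * j) = chiSeq m (fun t => u (m + t)) (m * j) :=
      congrFun (chiSeq_shift u m) _
    have hφ : gapProd m (fun t => u (m + t)) (m * j) * gapProd m (chiSeq m u) m =
        gapProd m (fun t => u (m + t)) (m * j) * gapProd m u m := by
      refine mul_prod_eq_mul_prod _ _ fun s hs => ?_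
      obtain ⟨hsm, hms⟩ := mem_filter.mp hs
      rw [mem_range] at hsm
      have hdvd := add_one_dvd_gapProd (fun t => u (m + t)) (N := m * j) (by nlinarith) hms
      rw [add_comm m s] at hdvd
      rw [chiSeq_apply m u s]
      linear_combination ZMod.mul_eq_zero_of_dvd_of_add_one_dvd (dvd_thetaSeq_one_shift u s) hdvd
    rw [show m * (j + 1) = m + m * j by ring, gapProd_add (chiSeq m u) (dvd_refl m),
      gapProd_add u (dvd_refl m), chiSeq_shift, hy]
    linear_combination gapProd m (chiSeq m u) m * ih (fun t => u (m + t)) +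
      chiSeq m (fun t => u (m + t)) (m * j) * hφ

theorem thetaSeq_chiSeq (u : ℕ → ZMod 2) (j : ℕ) :
    thetaSeq m j (chiSeq m u) = thetaSeq m j u + thetaSeq m (j + 1) u := by
  rcases Nat.eq_zero_or_pos j with rfl | hj
  · simp only [thetaSeq_zero, chiSeq_apply, zero_add]
  · rw [thetaSeq, chiSeq_mul_gapProd u hj, chiSeq_apply, thetaSeq, thetaSeq, thetaSeq,
      show m * (j + 1) = m * j + m by ring, gapProd_add u (dvd_mul_right m j), mul_one]
    ring

theorem thetaSeq_eq_zero_of_periodic {u : ℕ → ZMod 2} {n k : ℕ} (hu : Function.Periodic u n)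
    (hmn : ¬ m ∣ n) (hnk : n < m * k) : thetaSeq m k u = 0 := by
  have hmr : ¬ m ∣ m * k - n := fun h =>
    hmn (by simpa [Nat.sub_sub_self hnk.le] using Nat.dvd_sub (dvd_mul_right m k) h)
  have hper : u (m * k - n) = u (m * k) := by
    rw [← hu (m * k - n), Nat.sub_add_cancel hnk.le]
  have hn : 0 < n := Nat.pos_of_ne_zero fun h => hmn (h ▸ dvd_zero m)
  refine ZMod.eq_zero_of_dvd_of_add_one_dvd (dvd_mul_right _ _) ?_
  simpa [hper] using add_one_dvd_thetaSeq u (by omega : m * k - n < m * k) hmr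

end Sequences

section Unroll

variable {n : ℕ}

theorem idx_zero (i : Fin n) : idx i 0 = i :=
  Fin.ext (by simp [idx, Nat.mod_eq_of_lt i.isLt])

theorem idx_idx (i : Fin n) (a b : ℕ) : idx (idx i a) b = idx i (a + b) :=
  Fin.ext (by simp [idx, Nat.mod_add_mod, add_assoc])

def unroll (x : Fin n → ZMod 2) (i : Fin n) : ℕ → ZMod 2 :=
  fun s => x (idx i s)

theorem unroll_periodic (x : Fin n → ZMod 2) (i : Fin n) : Function.Periodic (unroll x i) n :=
  fun s => congrArg x (Fin.ext (by simp [idx, ← add_assoc]))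

theorem unroll_idx (x : Fin n → ZMod 2) (i : Fin n) (a : ℕ) :
    unroll x (idx i a) = fun t => unroll x i (a + t) := by
  funext t
  simp only [unroll, idx_idx]

variable (m : ℕ)

theorem theta_zero : theta n m 0 = id := if_pos rfl

theorem theta_apply_s16 (k : ℕ) (x : Fin n → ZMod 2) (i : Fin n) :
    theta n m k x i = thetaSeq m k (unroll x i) := by
  rcases eq_or_ne k 0 with rfl | hk
  · simp [theta_zero, thetaSeq_zero, unroll, idx_zero]
  · have hfilter : (Ico 1 (m * k)).filter (¬ m ∣ ·) = (range (m * k)).filter (¬ m ∣ ·) := by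
      ext s
      simp only [mem_filter, mem_Ico, mem_range]
      refine ⟨fun h => ⟨h.1.2, h.2⟩, fun h => ⟨⟨?_, h.1⟩, h.2⟩⟩
      exact Nat.pos_of_ne_zero fun h0 => h.2 (h0 ▸ dvd_zero m)
    rw [theta, if_neg hk, hfilter]
    rfl

theorem unroll_chi (x : Fin n → ZMod 2) (i : Fin n) :
    unroll ((theta n m 0 + theta n m 1) x) i = chiSeq m (unroll x i) := by
  funext s
  rw [chiSeq_apply, ← unroll_idx, ← theta_apply_s16]
  simp [unroll, theta_zero]

theorem theta_comp_chi (j : ℕ) :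
    theta n m j ∘ (theta n m 0 + theta n m 1) = theta n m j + theta n m (j + 1) := by
  funext x i
  rw [Function.comp_apply, theta_apply_s16, unroll_chi, thetaSeq_chiSeq, Pi.add_apply, Pi.add_apply,
    theta_apply_s16, theta_apply_s16]

theorem theta_eq_zero {j : ℕ} (hmn : ¬ m ∣ n) (hnj : n < m * j) : theta n m j = 0 := by
  funext x i
  rw [theta_apply_s16]
  exact thetaSeq_eq_zero_of_periodic (unroll_periodic x i) hmn hnj

end Unroll

theorem stmt16_general (n m : ℕ) (hm : 2 ≤ m) (hmn : ¬ m ∣ n)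
    (k : ℕ) :
    (theta n m 0 + theta n m 1)^[k] =
      ∑ j ∈ Finset.range (min k (n / m) + 1),
        ((Nat.choose k j : ZMod 2)) • theta n m j := by
  rw [← Function.id_comp (_^[k]), ← theta_zero (n := n) m,
    Function.comp_iterate_eq_sum_choose_nsmul (theta_comp_chi m) k]
  simp_rw [Nat.cast_smul_eq_nsmul (ZMod 2)]
  refine (sum_subset (range_subset_range.mpr (by omega)) fun j hjk hj => ?_).symm
  have hnj : n < m * j := by
    rw [mul_comm, ← Nat.div_lt_iff_lt_mul (by omega)]
    rw [mem_range] at hjk hj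
    omega
  rw [theta_eq_zero m hmn hnj, smul_zero]

theorem stmt16 (n m : ℕ) (hn : 1 ≤ n) (hm : 2 ≤ m) (hmn : ¬ m ∣ n)
    (k : ℕ) (hk : 1 ≤ k) :
    (theta n m 0 + theta n m 1)^[k] =
      ∑ j ∈ Finset.range (min k (n / m) + 1),
        ((Nat.choose k j : ZMod 2)) • theta n m j :=
  stmt16_general n m hm hmn k
end
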